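/- The convolution on multiplicative functions on partitioned permutations, defined by (f∗g)(𝒰,γ) := Σ f(𝒱,π) g(𝒲,σ) over all (𝒱,π),(𝒲,σ) with (𝒱,π)·(𝒲,σ) = (𝒰,γ), is commutative: f∗g = g∗f for all multiplicative f, g. -/

import Mathlib

open Equiv

def orbitSetoid {α : Type*} (π : Equiv.Perm α) : Setoid α where
  r := π.SameCycle
  iseqv := ⟨fun x => Equiv.Perm.SameCycle.refl π x, fun h => h.symm, fun h h' => h.trans h'⟩

noncomputable def cycleCount {n : ℕ} (π : Equiv.Perm (Fin n)) : ℕ :=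
  Nat.card (Quotient (orbitSetoid π))

noncomputable def pLen {n : ℕ} (V : Setoid (Fin n)) : ℤ :=
  (n : ℤ) - Nat.card (Quotient V)

noncomputable def permLen {n : ℕ} (π : Equiv.Perm (Fin n)) : ℤ :=
  (n : ℤ) - cycleCount π

theorem orbitSetoid_mul_le {α : Type*} (π σ : Equiv.Perm α) :
    orbitSetoid (π * σ) ≤ orbitSetoid π ⊔ orbitSetoid σ := by
  set S := orbitSetoid π ⊔ orbitSetoid σ with hS
  have hstep : ∀ x, S x ((π * σ) x) := by
    intro x
    have h1 : S x (σ x) := Setoid.le_def.mp le_sup_right ⟨1, by simp⟩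
    have h2 : S (σ x) (π (σ x)) := Setoid.le_def.mp le_sup_left ⟨1, by simp⟩
    exact S.iseqv.trans h1 h2
  have hpow : ∀ (k : ℤ) (x : α), S x (((π * σ) ^ k) x) := by
    intro k
    induction k using Int.induction_on with
    | zero => intro x; simpa using S.iseqv.refl x
    | succ k ih =>
        intro x
        have h : ((π * σ) ^ ((k : ℤ) + 1)) x = ((π * σ) ^ (k : ℤ)) ((π * σ) x) := by
          rw [zpow_add_one]
          simp [Equiv.Perm.mul_apply]
        rw [h]
        exact S.iseqv.trans (hstep x) (ih ((π * σ) x))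
    | pred k ih =>
        intro x
        have h : ((π * σ) ^ (-(k : ℤ) - 1)) x = ((π * σ) ^ (-(k : ℤ))) ((π * σ)⁻¹ x) := by
          rw [zpow_sub_one]
          simp [Equiv.Perm.mul_apply]
        rw [h]
        have hinv : S x ((π * σ)⁻¹ x) := by
          have h2 := hstep ((π * σ)⁻¹ x)
          rw [← Equiv.Perm.mul_apply, mul_inv_cancel, Equiv.Perm.one_apply] at h2
          exact S.iseqv.symm h2
        exact S.iseqv.trans hinv (ih ((π * σ)⁻¹ x))
  rw [Setoid.le_def]
  rintro x y ⟨k, hk⟩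
  exact hk ▸ hpow k x

/-- A partitioned permutation: a pair `(𝒱, π)` with `𝒱` a partition of `{1,…,n}`
(encoded as a setoid on `Fin n`) coarser than the orbit partition of `π`. -/
structure PartitionedPerm (n : ℕ) where
  part : Setoid (Fin n)
  perm : Equiv.Perm (Fin n)
  hle : orbitSetoid perm ≤ part

/-- The length `|(𝒱,π)| := 2|𝒱| − |π|` of a partitioned permutation. -/
noncomputable def ppLen {n : ℕ} (a : PartitionedPerm n) : ℤ :=
  2 * pLen a.part - permLen a.perm

/-- The product of partitioned permutations: `(𝒱,π)·(𝒲,σ) = (𝒱∨𝒲, πσ)` if the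
lengths add up, and `0` (here: `none`) otherwise. -/
noncomputable def ppMul {n : ℕ} (a b : PartitionedPerm n) : Option (PartitionedPerm n) :=
  if ppLen a + ppLen b = 2 * pLen (a.part ⊔ b.part) - permLen (a.perm * b.perm)
  then some ⟨a.part ⊔ b.part, a.perm * b.perm,
        le_trans (orbitSetoid_mul_le a.perm b.perm) (sup_le_sup a.hle b.hle)⟩
  else none

/-- The full cycle `γ_n = (1,2,…,n)`. -/
def gammaCycle (n : ℕ) : Equiv.Perm (Fin n) := finRotate n

/-- The permutation `γ_{m,n} = (1,…,m)(m+1,…,m+n)` consisting of two full cycles. -/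
def gammaTwo (m n : ℕ) : Equiv.Perm (Fin (m + n)) :=
  (Equiv.permCongr finSumFinEquiv) (Equiv.sumCongr (finRotate m) (finRotate n))

/-- The partitioned permutation `(1_n, γ_n)`. -/
noncomputable def topGamma (n : ℕ) : PartitionedPerm n :=
  ⟨⊤, gammaCycle n, le_top⟩

/-- The partitioned permutation `(1_{m+n}, γ_{m,n})`. -/
noncomputable def topGammaTwo (m n : ℕ) : PartitionedPerm (m + n) :=
  ⟨⊤, gammaTwo m n, le_top⟩

/-- `π` is a non-crossing permutation of `{1,…,n}`: `|π| + |π⁻¹γ_n| = n − 1`. -/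
def IsNC {n : ℕ} (π : Equiv.Perm (Fin n)) : Prop :=
  permLen π + permLen (π⁻¹ * gammaCycle n) = (n : ℤ) - 1

theorem quotient_mk_perm_apply {n : ℕ} (a : PartitionedPerm n) (x : Fin n) :
    Quotient.mk a.part (a.perm x) = Quotient.mk a.part x :=
  (Quotient.sound (Setoid.le_def.mp a.hle ⟨1, by simp⟩)).symm

/-- The permutation induced by `π` on a block of `𝒱` (for a partitioned permutation
`(𝒱,π)`), transported to `Fin k` where `k` is the size of the block. -/
noncomputable def blockPerm {n : ℕ} (a : PartitionedPerm n) (c : Quotient a.part) :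
    Equiv.Perm (Fin (Nat.card {x : Fin n // Quotient.mk a.part x = c})) :=
  (Finite.equivFin _).permCongr
    (a.perm.subtypePerm (p := fun x => Quotient.mk a.part x = c)
      (fun x => by show Quotient.mk a.part (a.perm x) = c ↔ Quotient.mk a.part x = c; rw [quotient_mk_perm_apply]))

/-- A multiplicative function on partitioned permutations: its value on `(1_n, π)`
depends only on the conjugacy class of `π`, and its value on a general `(𝒱,π)`
is the product over the blocks of `𝒱` of the values on `(1_V, π|_V)`. -/
def IsMultiplicativeFn (f : ∀ n, PartitionedPerm n → ℂ) : Prop :=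
  (∀ (n : ℕ) (π σ : Equiv.Perm (Fin n)),
      f n ⟨⊤, σ * π * σ⁻¹, le_top⟩ = f n ⟨⊤, π, le_top⟩) ∧
  (∀ (n : ℕ) (a : PartitionedPerm n),
      f n a = ∏ᶠ c : Quotient a.part,
        f (Nat.card {x : Fin n // Quotient.mk a.part x = c}) ⟨⊤, blockPerm a c, le_top⟩)

/-- The convolution of functions on partitioned permutations:
`(f∗g)(𝒰,γ) = Σ_{(𝒱,π)·(𝒲,σ) = (𝒰,γ)} f(𝒱,π) g(𝒲,σ)`. -/
noncomputable def ppConv (f g : ∀ n, PartitionedPerm n → ℂ) : ∀ n, PartitionedPerm n → ℂ :=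
  fun n u =>
    ∑ᶠ p ∈ {p : PartitionedPerm n × PartitionedPerm n | ppMul p.1 p.2 = some u},
      f n p.1 * g n p.2

/-!
The map `((𝒱,π), (𝒲,σ)) ↦ ((π𝒲, πσπ⁻¹), (𝒱,π))` permutes the factorizations
`(𝒱,π)·(𝒲,σ) = (𝒰,γ)`: `(πσπ⁻¹)π = πσ`, the join `π𝒲 ∨ 𝒱 = 𝒲 ∨ 𝒱` because every orbit of `π`
lies in a block of `𝒱`, and conjugation preserves lengths. Conjugation only relabels the blocks
and conjugates the restricted permutations, so a multiplicative `g` is conjugation invariant and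
the term `f(𝒱,π) g(𝒲,σ)` of `f∗g` equals the term `g(π𝒲, πσπ⁻¹) f(𝒱,π)` of `g∗f`.
-/

namespace Setoid

variable {α : Type*}

lemma comap_le_sup_of_rel_apply {e : α → α} {V : Setoid α} (hV : ∀ x, V x (e x))
    (W : Setoid α) : W.comap e ≤ V ⊔ W := by
  intro x y hxy
  have hx : (V ⊔ W) x (e x) := (le_sup_left : V ≤ V ⊔ W) (hV x)
  have hy : (V ⊔ W) y (e y) := (le_sup_left : V ≤ V ⊔ W) (hV y)
  exact (V ⊔ W).trans hx ((V ⊔ W).trans ((le_sup_right : W ≤ V ⊔ W) hxy) ((V ⊔ W).symm hy))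

lemma sup_comap_symm_eq_of_orbitSetoid_le {π : Perm α} {V : Setoid α}
    (h : orbitSetoid π ≤ V) (W : Setoid α) : V ⊔ W.comap π.symm = V ⊔ W := by
  have hπ : ∀ x, V x (π x) := fun x => h ⟨1, by simp⟩
  have hπ_symm : ∀ x, V x (π.symm x) := fun x => h ⟨-1, by simp⟩
  refine le_antisymm (sup_le le_sup_left (comap_le_sup_of_rel_apply hπ_symm W))
    (sup_le le_sup_left ?_)
  have hW : (W.comap π.symm).comap π = W := Setoid.ext fun x y => by simp [comap_rel]
  simpa only [hW] using comap_le_sup_of_rel_apply hπ (W.comap π.symm)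

lemma natCard_quotient_comap_equiv {β : Type*} (e : α ≃ β) (V : Setoid β) :
    Nat.card (Quotient (V.comap e)) = Nat.card (Quotient V) :=
  Nat.card_congr (Quotient.congr e fun _ _ => Iff.rfl)

end Setoid

lemma orbitSetoid_conj {α : Type*} (π σ : Perm α) :
    orbitSetoid (π * σ * π⁻¹) = (orbitSetoid σ).comap π.symm :=
  Setoid.ext fun _ _ => Perm.sameCycle_conj

variable {n : ℕ}

lemma pLen_comap_perm (π : Perm (Fin n)) (V : Setoid (Fin n)) : pLen (V.comap π) = pLen V := by
  rw [pLen, pLen, Setoid.natCard_quotient_comap_equiv]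

lemma permLen_conj (π σ : Perm (Fin n)) : permLen (π * σ * π⁻¹) = permLen σ := by
  rw [permLen, permLen, cycleCount, cycleCount, orbitSetoid_conj,
    Setoid.natCard_quotient_comap_equiv]

lemma IsMultiplicativeFn.apply_top_permCongr {f : ∀ n, PartitionedPerm n → ℂ}
    (hf : IsMultiplicativeFn f) {k k' : ℕ} (e : Fin k ≃ Fin k') (σ : Perm (Fin k)) :
    f k' ⟨⊤, e.permCongr σ, le_top⟩ = f k ⟨⊤, σ, le_top⟩ := by
  obtain rfl : k = k' := Fin.equiv_iff_eq.mp ⟨e⟩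
  exact hf.1 k σ e

namespace PartitionedPerm

@[ext]
lemma ext {a b : PartitionedPerm n} (hpart : a.part = b.part) (hperm : a.perm = b.perm) :
    a = b := by
  cases a; cases b; cases hpart; cases hperm; rfl

instance : MulAction (Perm (Fin n)) (PartitionedPerm n) where
  smul π a := ⟨a.part.comap π.symm, π * a.perm * π⁻¹, by
    rw [orbitSetoid_conj]; exact fun _ _ h => a.hle h⟩
  one_smul a := ext (Setoid.ext fun _ _ => Iff.rfl) (show 1 * a.perm * 1⁻¹ = a.perm by group)
  mul_smul π σ a := ext (Setoid.ext fun _ _ => Iff.rfl)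
    (show π * σ * a.perm * (π * σ)⁻¹ = π * (σ * a.perm * σ⁻¹) * π⁻¹ by group)

lemma smul_part (π : Perm (Fin n)) (a : PartitionedPerm n) :
    (π • a).part = a.part.comap π.symm := rfl

lemma smul_perm (π : Perm (Fin n)) (a : PartitionedPerm n) :
    (π • a).perm = π * a.perm * π⁻¹ := rfl

lemma ppLen_smul (π : Perm (Fin n)) (a : PartitionedPerm n) : ppLen (π • a) = ppLen a := by
  rw [ppLen, ppLen, smul_part, smul_perm, pLen_comap_perm, permLen_conj]

lemma ppMul_smul_perm_left (a b : PartitionedPerm n) : ppMul (a.perm • b) a = ppMul a b := by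
  have hpart : (a.perm • b).part ⊔ a.part = a.part ⊔ b.part := by
    rw [sup_comm, smul_part, Setoid.sup_comap_symm_eq_of_orbitSetoid_le a.hle]
  have hperm : (a.perm • b).perm * a.perm = a.perm * b.perm := by
    rw [smul_perm, inv_mul_cancel_right]
  simp only [ppMul, hpart, hperm, ppLen_smul, add_comm]

def quotientSmulEquiv (π : Perm (Fin n)) (a : PartitionedPerm n) :
    Quotient (π • a).part ≃ Quotient a.part :=
  Quotient.congr π.symm fun _ _ => Iff.rfl

lemma exists_blockPerm_smul_eq_permCongr (π : Perm (Fin n)) (a : PartitionedPerm n)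
    (c : Quotient a.part) :
    ∃ e : Fin _ ≃ Fin _,
      blockPerm (π • a) ((quotientSmulEquiv π a).symm c) = e.permCongr (blockPerm a c) := by
  have hblock : ∀ x, Quotient.mk a.part x = c ↔
      Quotient.mk (π • a).part (π x) = (quotientSmulEquiv π a).symm c := fun x => by
    simp [Equiv.eq_symm_apply, quotientSmulEquiv]
  refine ⟨(Finite.equivFin _).symm.trans ((π.subtypeEquiv hblock).trans (Finite.equivFin _)), ?_⟩
  ext x
  simp only [blockPerm, Equiv.permCongr_apply, Equiv.symm_trans_apply, Equiv.trans_apply,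
    Equiv.symm_symm, Equiv.symm_apply_apply, Equiv.Perm.subtypePerm_apply]
  congr 1

def swapSmulEquiv :
    PartitionedPerm n × PartitionedPerm n ≃ PartitionedPerm n × PartitionedPerm n where
  toFun p := (p.1.perm • p.2, p.1)
  invFun q := (q.2, q.2.perm⁻¹ • q.1)
  left_inv p := by simp
  right_inv q := by simp

end PartitionedPerm

open PartitionedPerm

lemma IsMultiplicativeFn.apply_smul {f : ∀ n, PartitionedPerm n → ℂ} (hf : IsMultiplicativeFn f)
    (π : Perm (Fin n)) (a : PartitionedPerm n) : f n (π • a) = f n a := by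
  rw [hf.2 n (π • a), hf.2 n a, ← finprod_comp_equiv (quotientSmulEquiv π a).symm]
  refine finprod_congr fun c => ?_
  obtain ⟨e, he⟩ := exists_blockPerm_smul_eq_permCongr π a c
  simp only [he]
  exact hf.apply_top_permCongr e _

theorem ppConv_comm_general (f g : ∀ n, PartitionedPerm n → ℂ)
    (hg : IsMultiplicativeFn g) :
    ppConv f g = ppConv g f := by
  funext n u
  refine finsum_mem_eq_of_bijOn swapSmulEquiv (Equiv.bijOn _ fun p => ?_) fun p _ => ?_
  · change ppMul (p.1.perm • p.2) p.1 = some u ↔ ppMul p.1 p.2 = some u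
    rw [ppMul_smul_perm_left]
  · change f n p.1 * g n p.2 = g n (p.1.perm • p.2) * f n p.1
    rw [hg.apply_smul, mul_comm]

/-- The convolution of multiplicative functions on partitioned permutations is
commutative: `f∗g = g∗f` for all multiplicative `f, g`. -/
theorem ppConv_comm (f g : ∀ n, PartitionedPerm n → ℂ)
    (hf : IsMultiplicativeFn f) (hg : IsMultiplicativeFn g) :
    ppConv f g = ppConv g f :=
  ppConv_comm_general f g hg
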